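/- arXiv:1709.10002 — 6 statements merged into one kernel-verified Lean document; each statement's English description precedes it below -/
import Mathlib

section
/- Let μ, α₁, α₂, β, a be real numbers with α₁ ≠ α₂, and let k₁, k₂ be non-negative integers with k₁ + k₂ = n − 1 and n ≥ 3. Define the quadratic form f(x₁,…,xₙ) = μx₁² + α₁·∑_{i=2}^{k₁+1} xᵢ² + α₂·∑_{i=k₁+2}^{n} xᵢ² + 2a·∑_{i=2}^{n} x₁xᵢ + 2β·∑_{2≤i<j≤n} xᵢxⱼ. If (A1) α₁ ≥ β and α₂ ≥ β; (A2) α₁ + α₂ + (n−3)β + μ ≥ 0; (A3) (μ + α₁ − β)[α₂ + (k₂−1)β] + (α₁ − β)μ + k₁β(α₂ − β + μ) − (n−1)a² ≥ 0; (A4) (α₁ − β)[α₂ + (k₂−1)β]μ + k₁(α₂ − β)βμ − a²[k₁(α₂ − β) + k₂(α₁ − β)] ≥ 0; (A5) μ + k₁α₁ + k₂α₂ > 0; and (A6) (α₁ − β)(α₂ − β)·{(α₁ − β)[α₂ + (k₂−1)β]μ + k₁(α₂ − β)βμ − a²[k₁(α₂ − β) + k₂(α₁ − β)]} = 0, then f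 is positive semidefinite, i.e., f(x₁,…,xₙ) ≥ 0 for all real x₁,…,xₙ. -/
open Finset

/-- The quadratic form
`f(x₁,…,xₙ) = μx₁² + α₁·∑_{i=2}^{k₁+1} xᵢ² + α₂·∑_{i=k₁+2}^{n} xᵢ²
  + 2a·∑_{i=2}^{n} x₁xᵢ + 2β·∑_{2≤i<j≤n} xᵢxⱼ`. -/
def quadFormF (n k₁ : ℕ) (μ α₁ α₂ β a : ℝ) (x : ℕ → ℝ) : ℝ :=
    μ * x 1 ^ 2 + α₁ * ∑ i ∈ Icc 2 (k₁ + 1), x i ^ 2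
    + α₂ * ∑ i ∈ Icc (k₁ + 2) n, x i ^ 2
    + 2 * a * ∑ i ∈ Icc 2 n, x 1 * x i
    + 2 * β * ∑ i ∈ Icc 2 n, ∑ j ∈ Icc (i + 1) n, x i * x j

/-!
With `t = x₁` and `s₁`, `s₂` the sums of the two blocks of coordinates,
`f = μt² + 2at(s₁ + s₂) + β(s₁ + s₂)² + (α₁ - β)∑₁ xᵢ² + (α₂ - β)∑₂ xᵢ²`.
Writing `sⱼ = √kⱼ · yⱼ`, Cauchy–Schwarz gives `yⱼ² ≤ ∑ⱼ xᵢ²`, so by (A1) `f` dominates a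
ternary quadratic form in `(t, y₁, y₂)`. Conditions (A2)–(A4) say that the coefficients of the
characteristic polynomial of its symmetric matrix alternate in sign, so it has no negative
eigenvalue and is positive semidefinite.
-/

theorem Finset.sq_sum_Icc {R : Type*} [CommSemiring R] (x : ℕ → R) (m n : ℕ) :
    (∑ i ∈ Icc m n, x i) ^ 2
      = ∑ i ∈ Icc m n, x i ^ 2 + 2 * ∑ i ∈ Icc m n, ∑ j ∈ Icc (i + 1) n, x i * x j := by
  induction n with
  | zero => rcases m with _ | m <;> simp [sq]
  | succ n ih =>
    by_cases hm : m ≤ n + 1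
    · have hinner : ∀ i ∈ Icc m n, ∑ j ∈ Icc (i + 1) (n + 1), x i * x j
          = ∑ j ∈ Icc (i + 1) n, x i * x j + x i * x (n + 1) := fun i hi =>
        sum_Icc_succ_top (by linarith [(mem_Icc.1 hi).2]) _
      rw [sum_Icc_succ_top hm, sum_Icc_succ_top hm, sum_Icc_succ_top hm, sum_congr rfl hinner,
        sum_add_distrib, ← sum_mul, Icc_eq_empty (show ¬n + 1 + 1 ≤ n + 1 by omega), sum_empty,
        add_sq, ih]
      ring
    · simp [Icc_eq_empty (by omega : ¬m ≤ n + 1)]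

theorem Finset.sum_Icc_add_sum_Icc {M : Type*} [AddCommMonoid M] (f : ℕ → M) {m k n : ℕ}
    (hmk : m ≤ k + 1) (hkn : k ≤ n) :
    ∑ i ∈ Icc m k, f i + ∑ i ∈ Icc (k + 1) n, f i = ∑ i ∈ Icc m n, f i := by
  simp only [← Ico_add_one_right_eq_Icc]
  exact sum_Ico_consecutive f hmk (by omega)

theorem Finset.exists_sqrt_card_mul_eq_sum_and_sq_le_sum_sq {ι : Type*} (s : Finset ι)
    (f : ι → ℝ) : ∃ y : ℝ, √(#s : ℝ) * y = ∑ i ∈ s, f i ∧ y ^ 2 ≤ ∑ i ∈ s, f i ^ 2 := by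
  refine ⟨(∑ i ∈ s, f i) / √(#s : ℝ), ?_, ?_⟩
  · obtain rfl | hs := s.eq_empty_or_nonempty
    · simp
    · exact mul_div_cancel₀ _ (by positivity)
  · rw [div_pow, Real.sq_sqrt (by positivity)]
    exact div_le_of_le_mul₀ (by positivity) (sum_nonneg fun i _ => sq_nonneg _)
      (mul_comm (∑ i ∈ s, f i ^ 2) _ ▸ sq_sum_le_card_mul_sum_sq)

theorem Matrix.IsHermitian.posSemidef_of_det_scalar_sub_ne_zero {n : Type*} [Fintype n]
    [DecidableEq n] {A : Matrix n n ℝ} (hA : A.IsHermitian)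
    (h : ∀ t < 0, (Matrix.scalar n t - A).det ≠ 0) : A.PosSemidef := by
  refine hA.posSemidef_iff_eigenvalues_nonneg.2 fun i => ?_
  by_contra! hneg
  have hroot := Matrix.mem_spectrum_iff_isRoot_charpoly.1 (hA.eigenvalues_mem_spectrum_real i)
  exact h _ hneg (by rw [← Matrix.eval_charpoly]; exact hroot)

theorem det_scalar_sub_sym3 (p q r u v w t : ℝ) :
    (Matrix.scalar (Fin 3) t - !![p, u, v; u, q, w; v, w, r]).det
      = t ^ 3 - (p + q + r) * t ^ 2 + (p * q + p * r + q * r - u ^ 2 - v ^ 2 - w ^ 2) * t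
        - (p * q * r + 2 * u * v * w - p * w ^ 2 - q * v ^ 2 - r * u ^ 2) := by
  simp only [Matrix.det_fin_three, Matrix.sub_apply, Matrix.scalar_apply, Matrix.of_apply,
    Matrix.cons_val', Matrix.cons_val_zero, Matrix.cons_val_one, Matrix.cons_val,
    Matrix.cons_val_fin_one, Fin.isValue, Matrix.diagonal_apply_eq, Matrix.diagonal_apply_ne, ne_eq,
    Fin.reduceEq, not_false_eq_true]
  ring

theorem posSemidef_sym3 {p q r u v w : ℝ} (h₁ : 0 ≤ p + q + r)
    (h₂ : 0 ≤ p * q + p * r + q * r - u ^ 2 - v ^ 2 - w ^ 2)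
    (h₃ : 0 ≤ p * q * r + 2 * u * v * w - p * w ^ 2 - q * v ^ 2 - r * u ^ 2) :
    (!![p, u, v; u, q, w; v, w, r]).PosSemidef := by
  have hA : (!![p, u, v; u, q, w; v, w, r]).IsHermitian := by
    ext i j; fin_cases i <;> fin_cases j <;> rfl
  refine hA.posSemidef_of_det_scalar_sub_ne_zero fun t ht => ?_
  rw [det_scalar_sub_sym3]
  nlinarith [mul_nonneg h₁ (sq_nonneg t), mul_nonneg h₂ (neg_nonneg.2 ht.le),
    pow_pos (neg_pos.2 ht) 3]

theorem sym3_quadForm_nonneg {p q r u v w : ℝ} (h₁ : 0 ≤ p + q + r)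
    (h₂ : 0 ≤ p * q + p * r + q * r - u ^ 2 - v ^ 2 - w ^ 2)
    (h₃ : 0 ≤ p * q * r + 2 * u * v * w - p * w ^ 2 - q * v ^ 2 - r * u ^ 2) (x y z : ℝ) :
    0 ≤ p * x ^ 2 + q * y ^ 2 + r * z ^ 2 + 2 * u * x * y + 2 * v * x * z + 2 * w * y * z := by
  have h := (posSemidef_sym3 h₁ h₂ h₃).dotProduct_mulVec_nonneg ![x, y, z]
  simp only [dotProduct, Pi.star_apply, star_trivial, Matrix.mulVec, Matrix.of_apply,
    Matrix.cons_val', Matrix.cons_val_fin_one, Fin.sum_univ_three, Fin.isValue,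
    Matrix.cons_val_zero, Matrix.cons_val_one, Matrix.cons_val] at h
  linarith

theorem quadFormF_eq {n k₁ : ℕ} (μ α₁ α₂ β a : ℝ) (hkn : k₁ + 1 ≤ n) (x : ℕ → ℝ) :
    quadFormF n k₁ μ α₁ α₂ β a x
      = μ * x 1 ^ 2
        + 2 * a * x 1 * (∑ i ∈ Icc 2 (k₁ + 1), x i + ∑ i ∈ Icc (k₁ + 2) n, x i)
        + β * (∑ i ∈ Icc 2 (k₁ + 1), x i + ∑ i ∈ Icc (k₁ + 2) n, x i) ^ 2
        + (α₁ - β) * ∑ i ∈ Icc 2 (k₁ + 1), x i ^ 2 + (α₂ - β) * ∑ i ∈ Icc (k₁ + 2) n, x i ^ 2 := by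
  have hsum : ∀ f : ℕ → ℝ,
      ∑ i ∈ Icc 2 (k₁ + 1), f i + ∑ i ∈ Icc (k₁ + 2) n, f i = ∑ i ∈ Icc 2 n, f i :=
    fun f => sum_Icc_add_sum_Icc f (by omega) hkn
  have hsq := sq_sum_Icc x 2 n
  rw [← hsum fun i => x i ^ 2] at hsq
  rw [quadFormF, hsum, ← mul_sum]
  linear_combination (-β) * hsq

theorem reducedForm_nonneg {μ α₁ α₂ β a r₁ r₂ : ℝ}
    (hA2 : α₁ + α₂ + (r₁ ^ 2 + r₂ ^ 2 - 2) * β + μ ≥ 0)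
    (hA3 : (μ + α₁ - β) * (α₂ + (r₂ ^ 2 - 1) * β) + (α₁ - β) * μ
      + r₁ ^ 2 * β * (α₂ - β + μ) - (r₁ ^ 2 + r₂ ^ 2) * a ^ 2 ≥ 0)
    (hA4 : (α₁ - β) * (α₂ + (r₂ ^ 2 - 1) * β) * μ + r₁ ^ 2 * (α₂ - β) * β * μ
      - a ^ 2 * (r₁ ^ 2 * (α₂ - β) + r₂ ^ 2 * (α₁ - β)) ≥ 0) (t y z : ℝ) :
    0 ≤ μ * t ^ 2 + 2 * a * t * (r₁ * y + r₂ * z) + β * (r₁ * y + r₂ * z) ^ 2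
      + (α₁ - β) * y ^ 2 + (α₂ - β) * z ^ 2 := by
  have h := sym3_quadForm_nonneg (p := μ) (q := α₁ - β + r₁ ^ 2 * β) (r := α₂ - β + r₂ ^ 2 * β)
    (u := a * r₁) (v := a * r₂) (w := β * r₁ * r₂) ?_ ?_ ?_ t y z
  · linear_combination h
  · linear_combination hA2
  · linear_combination hA3
  · linear_combination hA4

theorem quadFormF_nonneg_general (n k₁ k₂ : ℕ) (μ α₁ α₂ β a : ℝ)
    (hn : 3 ≤ n) (hk : k₁ + k₂ = n - 1)
    (hA1 : α₁ ≥ β ∧ α₂ ≥ β)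
    (hA2 : α₁ + α₂ + ((n : ℝ) - 3) * β + μ ≥ 0)
    (hA3 : (μ + α₁ - β) * (α₂ + ((k₂ : ℝ) - 1) * β) + (α₁ - β) * μ
      + (k₁ : ℝ) * β * (α₂ - β + μ) - ((n : ℝ) - 1) * a ^ 2 ≥ 0)
    (hA4 : (α₁ - β) * (α₂ + ((k₂ : ℝ) - 1) * β) * μ + (k₁ : ℝ) * (α₂ - β) * β * μ
      - a ^ 2 * ((k₁ : ℝ) * (α₂ - β) + (k₂ : ℝ) * (α₁ - β)) ≥ 0) :
    ∀ x : ℕ → ℝ, quadFormF n k₁ μ α₁ α₂ β a x ≥ 0 := by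
  intro x
  have hn' : (n : ℝ) = k₁ + k₂ + 1 := by norm_cast; omega
  have hc₁ : #(Icc 2 (k₁ + 1)) = k₁ := by simp
  have hc₂ : #(Icc (k₁ + 2) n) = k₂ := by rw [Nat.card_Icc]; omega
  have hk₁ : (k₁ : ℝ) = √(k₁ : ℝ) ^ 2 := (Real.sq_sqrt k₁.cast_nonneg).symm
  have hk₂ : (k₂ : ℝ) = √(k₂ : ℝ) ^ 2 := (Real.sq_sqrt k₂.cast_nonneg).symm
  rw [hn'] at hA2 hA3
  rw [hk₁, hk₂] at hA2 hA3 hA4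
  obtain ⟨y, hy, hyQ⟩ := exists_sqrt_card_mul_eq_sum_and_sq_le_sum_sq (Icc 2 (k₁ + 1)) x
  obtain ⟨z, hz, hzQ⟩ := exists_sqrt_card_mul_eq_sum_and_sq_le_sum_sq (Icc (k₁ + 2) n) x
  rw [hc₁] at hy
  rw [hc₂] at hz
  have key := reducedForm_nonneg (by linear_combination hA2) (by linear_combination hA3) hA4
    (x 1) y z
  rw [hy, hz] at key
  rw [ge_iff_le, quadFormF_eq μ α₁ α₂ β a (by omega) x]
  linarith [mul_le_mul_of_nonneg_left hyQ (sub_nonneg.2 hA1.1),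
    mul_le_mul_of_nonneg_left hzQ (sub_nonneg.2 hA1.2)]

theorem quadFormF_nonneg (n k₁ k₂ : ℕ) (μ α₁ α₂ β a : ℝ)
    (hn : 3 ≤ n) (hk : k₁ + k₂ = n - 1) (hα : α₁ ≠ α₂)
    (hA1 : α₁ ≥ β ∧ α₂ ≥ β)
    (hA2 : α₁ + α₂ + ((n : ℝ) - 3) * β + μ ≥ 0)
    (hA3 : (μ + α₁ - β) * (α₂ + ((k₂ : ℝ) - 1) * β) + (α₁ - β) * μ
      + (k₁ : ℝ) * β * (α₂ - β + μ) - ((n : ℝ) - 1) * a ^ 2 ≥ 0)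
    (hA4 : (α₁ - β) * (α₂ + ((k₂ : ℝ) - 1) * β) * μ + (k₁ : ℝ) * (α₂ - β) * β * μ
      - a ^ 2 * ((k₁ : ℝ) * (α₂ - β) + (k₂ : ℝ) * (α₁ - β)) ≥ 0)
    (hA5 : μ + (k₁ : ℝ) * α₁ + (k₂ : ℝ) * α₂ > 0)
    (hA6 : (α₁ - β) * (α₂ - β) *
      ((α₁ - β) * (α₂ + ((k₂ : ℝ) - 1) * β) * μ + (k₁ : ℝ) * (α₂ - β) * β * μ
        - a ^ 2 * ((k₁ : ℝ) * (α₂ - β) + (k₂ : ℝ) * (α₁ - β))) = 0) :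
    ∀ x : ℕ → ℝ, quadFormF n k₁ μ α₁ α₂ β a x ≥ 0 :=
  quadFormF_nonneg_general n k₁ k₂ μ α₁ α₂ β a hn hk hA1 hA2 hA3 hA4
end

section
/- For any real numbers x₁,…,xₙ with n ≥ 2, one has ∑_{i=2}^{n} x₁xᵢ − ∑_{i=2}^{n} xᵢ² ≤ ((n−1)/(4n))·(∑_{i=1}^{n} xᵢ)², and equality holds if and only if x₂ = ⋯ = xₙ = x₁/(n+1). -/
/-!
Put `m = n - 1`, `a = x₁` and `S = x₂ + ⋯ + xₙ`, with mean `c = S / m`. The gap between the two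
sides is the sum of squares
`∑ (xᵢ - c)² + m / (4(m+1)) · (a - (m+2) c)²`:
the first term is the spread of `x₂, …, xₙ` around their mean, and what remains is a
nonnegative quadratic form in `a` and `c`. It vanishes iff every `xᵢ = c` and `a = (m+2) c`.
-/

open Finset

section
variable {ι : Type*} (s : Finset ι) (a : ℝ) (y : ι → ℝ)

theorem sum_sq_sub_average (hs : s.Nonempty) :
    ∑ i ∈ s, (y i - (∑ j ∈ s, y j) / #s) ^ 2 = ∑ i ∈ s, y i ^ 2 - (∑ i ∈ s, y i) ^ 2 / #s := by
  have hm : (#s : ℝ) ≠ 0 := by exact_mod_cast hs.card_pos.ne'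
  set c := (∑ j ∈ s, y j) / #s
  have hS : ∑ i ∈ s, y i = #s * c := (mul_div_cancel₀ _ hm).symm
  simp_rw [sub_sq, sum_add_distrib, sum_sub_distrib, ← sum_mul, ← mul_sum, sum_const, nsmul_eq_mul,
    hS]
  field_simp
  ring

theorem bound_sub_mul_sum_add_sum_sq_eq (hs : s.Nonempty) :
    #s / (4 * (#s + 1)) * (a + ∑ i ∈ s, y i) ^ 2 - (a * ∑ i ∈ s, y i - ∑ i ∈ s, y i ^ 2) =
      ∑ i ∈ s, (y i - (∑ j ∈ s, y j) / #s) ^ 2 +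
        #s / (4 * (#s + 1)) * (a - (#s + 2) * ((∑ j ∈ s, y j) / #s)) ^ 2 := by
  have hm : (#s : ℝ) ≠ 0 := by exact_mod_cast hs.card_pos.ne'
  rw [sum_sq_sub_average s y hs]
  field_simp
  ring

theorem mul_sum_sub_sum_sq_le {n : ℕ} (hn : #s + 1 = n) (hs : s.Nonempty) :
    a * ∑ i ∈ s, y i - ∑ i ∈ s, y i ^ 2 ≤ ((n : ℝ) - 1) / (4 * n) * (a + ∑ i ∈ s, y i) ^ 2 := by
  subst hn
  push_cast
  rw [add_sub_cancel_right, ← sub_nonneg, bound_sub_mul_sum_add_sum_sq_eq s a y hs]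
  positivity

theorem mul_sum_sub_sum_sq_eq_iff {n : ℕ} (hn : #s + 1 = n) (hs : s.Nonempty) :
    a * ∑ i ∈ s, y i - ∑ i ∈ s, y i ^ 2 = ((n : ℝ) - 1) / (4 * n) * (a + ∑ i ∈ s, y i) ^ 2 ↔
      ∀ i ∈ s, y i = a / ((n : ℝ) + 1) := by
  subst hn
  push_cast
  have hcoef : (#s : ℝ) / (4 * (#s + 1)) ≠ 0 := by positivity
  rw [add_sub_cancel_right, eq_comm, ← sub_eq_zero, bound_sub_mul_sum_add_sum_sq_eq s a y hs,
    add_eq_zero_iff_of_nonneg (by positivity) (by positivity),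
    sum_eq_zero_iff_of_nonneg fun _ _ ↦ sq_nonneg _, mul_eq_zero, or_iff_right hcoef]
  simp only [pow_eq_zero_iff two_ne_zero, sub_eq_zero]
  set c := (∑ j ∈ s, y j) / #s with hc
  constructor
  · rintro ⟨hy, ha⟩ i hi
    rw [hy i hi, ha, add_assoc, one_add_one_eq_two]
    field_simp
  · intro hy
    have hmean : c = a / (#s + 1 + 1) := by
      rw [hc, sum_congr rfl hy, sum_const, nsmul_eq_mul]
      field_simp
    refine ⟨fun i hi ↦ by rw [hy i hi, hmean], ?_⟩
    rw [hmean]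
    field_simp
    ring

end

/-- For real `x₁,…,xₙ` with `n ≥ 2`:
`∑_{i=2}^{n} x₁xᵢ − ∑_{i=2}^{n} xᵢ² ≤ ((n−1)/(4n))·(∑_{i=1}^{n} xᵢ)²`,
with equality iff `x₂ = ⋯ = xₙ = x₁/(n+1)`. -/
theorem deng_lemma_2_2 (n : ℕ) (hn : 2 ≤ n) (x : ℕ → ℝ) :
    (∑ i ∈ Icc 2 n, x 1 * x i) - ∑ i ∈ Icc 2 n, x i ^ 2 ≤
      ((n : ℝ) - 1) / (4 * (n : ℝ)) * (∑ i ∈ Icc 1 n, x i) ^ 2 ∧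
    ((∑ i ∈ Icc 2 n, x 1 * x i) - ∑ i ∈ Icc 2 n, x i ^ 2 =
        ((n : ℝ) - 1) / (4 * (n : ℝ)) * (∑ i ∈ Icc 1 n, x i) ^ 2 ↔
      ∀ i ∈ Icc 2 n, x i = x 1 / ((n : ℝ) + 1)) := by
  have hcard : #(Icc 2 n) + 1 = n := by rw [Nat.card_Icc]; omega
  have hne : (Icc 2 n).Nonempty := nonempty_Icc.mpr hn
  have hsplit : ∑ i ∈ Icc 1 n, x i = x 1 + ∑ i ∈ Icc 2 n, x i := by
    rw [← insert_Icc_add_one_left_eq_Icc (by omega : 1 ≤ n), sum_insert (by simp)]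
    rfl
  rw [← mul_sum, hsplit]
  exact ⟨mul_sum_sub_sum_sq_le _ _ _ hcard hne, mul_sum_sub_sum_sq_eq_iff _ _ _ hcard hne⟩
end

section
/- For any real numbers x₁,…,xₙ with n ≥ 2, one has ∑_{i=2}^{n} x₁xᵢ − x₁² ≤ (1/8)·(∑_{i=1}^{n} xᵢ)², and equality holds if and only if x₂ + ⋯ + xₙ = 3x₁. -/
/-!
With `a = x₁` and `s = x₂ + ⋯ + xₙ` the claim reads `a s - a² ≤ (a + s)² / 8`, and the
difference of the two sides is the square `(s - 3a)² / 8`.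
-/

open Finset

lemma sq_add_div_eight_sub_mul_sub_sq (a s : ℝ) :
    (1 / 8 : ℝ) * (a + s) ^ 2 - (a * s - a ^ 2) = (s - 3 * a) ^ 2 / 8 := by
  ring

lemma mul_sub_sq_le_sq_add_div_eight (a s : ℝ) :
    a * s - a ^ 2 ≤ (1 / 8 : ℝ) * (a + s) ^ 2 := by
  rw [← sub_nonneg, sq_add_div_eight_sub_mul_sub_sq]
  positivity

lemma mul_sub_sq_eq_sq_add_div_eight_iff (a s : ℝ) :
    a * s - a ^ 2 = (1 / 8 : ℝ) * (a + s) ^ 2 ↔ s = 3 * a := by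
  rw [eq_comm, ← sub_eq_zero, sq_add_div_eight_sub_mul_sub_sq]
  simp [sub_eq_zero]

/-- For real `x₁,…,xₙ` with `n ≥ 2`:
`∑_{i=2}^{n} x₁xᵢ − x₁² ≤ (1/8)·(∑_{i=1}^{n} xᵢ)²`,
with equality iff `x₂ + ⋯ + xₙ = 3x₁`. -/
theorem deng_lemma_3_3 (n : ℕ) (hn : 2 ≤ n) (x : ℕ → ℝ) :
    (∑ i ∈ Icc 2 n, x 1 * x i) - x 1 ^ 2 ≤
      (1 / 8 : ℝ) * (∑ i ∈ Icc 1 n, x i) ^ 2 ∧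
    ((∑ i ∈ Icc 2 n, x 1 * x i) - x 1 ^ 2 =
        (1 / 8 : ℝ) * (∑ i ∈ Icc 1 n, x i) ^ 2 ↔
      ∑ i ∈ Icc 2 n, x i = 3 * x 1) := by
  have hsplit : ∑ i ∈ Icc 1 n, x i = x 1 + ∑ i ∈ Icc 2 n, x i := by
    rw [← insert_Icc_add_one_left_eq_Icc (by omega : 1 ≤ n), sum_insert (by simp)]
    rfl
  rw [← mul_sum, hsplit]
  exact ⟨mul_sub_sq_le_sq_add_div_eight _ _, mul_sub_sq_eq_sq_add_div_eight_iff _ _⟩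
end

section
/- For any real numbers x₁,…,xₙ with n ≥ 3, one has −(n−2)·∑_{i=2}^{n} xᵢ² + (n−2)·∑_{i=2}^{n} x₁xᵢ + (n−1)·∑_{2≤i<j≤n} xᵢxⱼ ≤ ((n−2)(n−1)/(2(n+1)))·(∑_{i=1}^{n} xᵢ)², and equality holds if and only if x₂ = ⋯ = xₙ = x₁/2. -/
/-!
Write `c = n - 1`, `S = ∑_{i≥2} xᵢ`, `Q = ∑_{i≥2} xᵢ²`, and use `2 ∑_{2≤i<j≤n} xᵢxⱼ = S² - Q`.
Then `2(n+1)c²` times the right-hand side minus the left-hand side equals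
`(3n-5)(n+1) ∑_{i≥2} (c xᵢ - S)² + (n-2)(n-1) (c x₁ - 2S)²`, a positive combination of squares.
It vanishes exactly when every `xᵢ` (`i ≥ 2`) equals `S / c` and `x₁ = 2S / c`, i.e. `xᵢ = x₁ / 2`.
-/

open Finset

theorem sq_sum_Icc_eq_sum_sq_add_two_mul_sum_lt {R : Type*} [CommSemiring R] (a n : ℕ)
    (f : ℕ → R) :
    (∑ i ∈ Icc a n, f i) ^ 2 =
      ∑ i ∈ Icc a n, f i ^ 2 + 2 * ∑ i ∈ Icc a n, ∑ j ∈ Icc (i + 1) n, f i * f j := by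
  induction n with
  | zero => rcases Nat.eq_zero_or_pos a with rfl | ha <;> simp [*, sq, Icc_eq_empty_of_lt]
  | succ n ih =>
    rcases le_or_gt a (n + 1) with ha | ha
    · have hinner : ∀ i ∈ Icc a n, ∑ j ∈ Icc (i + 1) (n + 1), f i * f j
          = ∑ j ∈ Icc (i + 1) n, f i * f j + f i * f (n + 1) := fun i hi =>
        sum_Icc_succ_top (by simp at hi; omega) _
      rw [sum_Icc_succ_top ha, sum_Icc_succ_top ha, sum_Icc_succ_top ha, sum_congr rfl hinner,
        Icc_eq_empty_of_lt (Nat.lt_succ_self (n + 1)), sum_empty, sum_add_distrib, ← sum_mul,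
        add_sq, ih]
      ring
    · simp [Icc_eq_empty_of_lt ha]

theorem sum_sq_card_mul_sub_sum {ι R : Type*} [CommRing R] (s : Finset ι) (f : ι → R) :
    ∑ i ∈ s, (#s * f i - ∑ j ∈ s, f j) ^ 2 =
      #s ^ 2 * ∑ i ∈ s, f i ^ 2 - #s * (∑ i ∈ s, f i) ^ 2 := by
  simp only [sub_sq, sum_add_distrib, sum_sub_distrib, sum_const, nsmul_eq_mul, mul_pow,
    ← mul_sum, ← sum_mul]
  ring

section OrderedField

variable {R : Type*} [Field R] [LinearOrder R] [IsStrictOrderedRing R]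

theorem sum_sq_card_mul_sub_sum_eq_zero_iff {ι : Type*} (s : Finset ι) (f : ι → R) :
    ∑ i ∈ s, (#s * f i - ∑ j ∈ s, f j) ^ 2 = 0 ↔ ∀ i ∈ s, #s * f i = ∑ j ∈ s, f j := by
  simp only [sum_eq_zero_iff_of_nonneg fun _ _ => sq_nonneg _, sq_eq_zero_iff, sub_eq_zero]

theorem card_mul_eq_sum_and_card_mul_eq_two_mul_sum_iff {ι : Type*} {s : Finset ι}
    (hs : s.Nonempty) (f : ι → R) (a : R) :
    ((∀ i ∈ s, #s * f i = ∑ j ∈ s, f j) ∧ #s * a = 2 * ∑ j ∈ s, f j) ↔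
      ∀ i ∈ s, f i = a / 2 := by
  have hc : (#s : R) ≠ 0 := by simp [hs.ne_empty]
  constructor
  · rintro ⟨hf, ha⟩ i hi
    apply mul_left_cancel₀ hc
    linarith [hf i hi]
  · intro hf
    have hsum : ∑ j ∈ s, f j = #s * (a / 2) := by rw [sum_congr rfl hf, sum_const, nsmul_eq_mul]
    exact ⟨fun i hi => by rw [hf i hi, hsum], by rw [hsum]; ring⟩

theorem le_and_eq_iff_of_pos_mul_sub_eq {K A B T U x y : R} (hK : 0 < K) (hA : 0 < A)
    (hB : 0 < B) (hT : 0 ≤ T) (h : K * (y - x) = A * T + B * U ^ 2) :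
    x ≤ y ∧ (x = y ↔ T = 0 ∧ U = 0) := by
  have hAT := mul_nonneg hA.le hT
  have hBU := mul_nonneg hB.le (sq_nonneg U)
  refine ⟨le_of_sub_nonneg <| nonneg_of_mul_nonneg_right (by linarith) hK, fun hxy => ?_, ?_⟩
  · rw [hxy, sub_self, mul_zero] at h
    exact ⟨(mul_eq_zero.1 (by linarith)).resolve_left hA.ne',
      pow_eq_zero_iff two_ne_zero |>.1 <| (mul_eq_zero.1 (by linarith)).resolve_left hB.ne'⟩
  · rintro ⟨rfl, rfl⟩
    exact (sub_eq_zero.1 <| (mul_eq_zero.1 <| h.trans <| by ring).resolve_left hK.ne').symm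

end OrderedField

theorem oprea_ineq_4_14_sos_identity {R : Type*} [Field R] [CharZero R] (n a S Q P : R) (hn : n + 1 ≠ 0)
    (hSQP : S ^ 2 = Q + 2 * P) :
    2 * (n + 1) * (n - 1) ^ 2 * ((n - 2) * (n - 1) / (2 * (n + 1)) * (a + S) ^ 2
        - (-(n - 2) * Q + (n - 2) * (a * S) + (n - 1) * P))
      = (3 * n - 5) * (n + 1) * ((n - 1) ^ 2 * Q - (n - 1) * S ^ 2)
        + (n - 2) * (n - 1) * ((n - 1) * a - 2 * S) ^ 2 := by
  rw [show P = (S ^ 2 - Q) / 2 by linear_combination -hSQP / 2]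
  field_simp
  ring

/-- For real `x₁,…,xₙ` with `n ≥ 3`:
`−(n−2)∑_{i=2}^{n} xᵢ² + (n−2)∑_{i=2}^{n} x₁xᵢ + (n−1)∑_{2≤i<j≤n} xᵢxⱼ
  ≤ ((n−2)(n−1)/(2(n+1)))·(∑_{i=1}^{n} xᵢ)²`,
with equality iff `x₂ = ⋯ = xₙ = x₁/2`. -/
theorem oprea_ineq_4_14 (n : ℕ) (hn : 3 ≤ n) (x : ℕ → ℝ) :
    -((n : ℝ) - 2) * (∑ i ∈ Icc 2 n, x i ^ 2)
      + ((n : ℝ) - 2) * (∑ i ∈ Icc 2 n, x 1 * x i)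
      + ((n : ℝ) - 1) * (∑ i ∈ Icc 2 n, ∑ j ∈ Icc (i + 1) n, x i * x j) ≤
      ((n : ℝ) - 2) * ((n : ℝ) - 1) / (2 * ((n : ℝ) + 1)) * (∑ i ∈ Icc 1 n, x i) ^ 2 ∧
    (-((n : ℝ) - 2) * (∑ i ∈ Icc 2 n, x i ^ 2)
        + ((n : ℝ) - 2) * (∑ i ∈ Icc 2 n, x 1 * x i)
        + ((n : ℝ) - 1) * (∑ i ∈ Icc 2 n, ∑ j ∈ Icc (i + 1) n, x i * x j) =
        ((n : ℝ) - 2) * ((n : ℝ) - 1) / (2 * ((n : ℝ) + 1)) * (∑ i ∈ Icc 1 n, x i) ^ 2 ↔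
      ∀ i ∈ Icc 2 n, x i = x 1 / 2) := by
  have hn' : (3 : ℝ) ≤ n := by exact_mod_cast hn
  have hcard : (#(Icc 2 n) : ℝ) = n - 1 := by
    rw [Nat.card_Icc, Nat.cast_sub (by omega)]; push_cast; ring
  have hvar := sum_sq_card_mul_sub_sum (Icc 2 n) x
  rw [hcard] at hvar
  have hsos := oprea_ineq_4_14_sos_identity (n : ℝ) (x 1) _ _ _ (by positivity)
    (sq_sum_Icc_eq_sum_sq_add_two_mul_sum_lt 2 n x)
  rw [← hvar] at hsos
  have hsum : ∑ i ∈ Icc 1 n, x i = x 1 + ∑ i ∈ Icc 2 n, x i := by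
    rw [← insert_Icc_add_one_left_eq_Icc (by omega : 1 ≤ n), sum_insert (by simp)]; rfl
  rw [hsum, ← mul_sum]
  obtain ⟨hle, heq⟩ := le_and_eq_iff_of_pos_mul_sub_eq (by nlinarith) (by nlinarith)
    (by nlinarith) (sum_nonneg fun _ _ => sq_nonneg _) hsos
  refine ⟨hle, ?_⟩
  rw [heq, ← hcard, sum_sq_card_mul_sub_sum_eq_zero_iff, sub_eq_zero,
    card_mul_eq_sum_and_card_mul_eq_two_mul_sum_iff (nonempty_Icc.2 (by omega))]
end

section
/- Let y₁,…,yₙ be real numbers with n ≥ 3, and let r be an integer with 2 ≤ r ≤ n. Then −(n−2)y₁² − (n−1)·∑_{1≤i≤n, i≠1, i≠r} yᵢ² + (n−2)·∑_{i=2}^{n} y₁yᵢ + (n−1)·∑_{2≤i<j≤n} yᵢyⱼ ≤ ((3n−1)(n−2)/(2(3n+5)))·(∑_{i=1}^{n} yᵢ)², and equality holds if and only if y₂ = ⋯ = y_{r−1} = y_{r+1} = ⋯ = yₙ = (3/2)y₁ and y_r = (9/2)y₁. -/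
/-!
Write `a = y₁`, `b = y_r`, and let `P`, `Q` be the sum and the sum of squares of the remaining
`n - 2` coordinates. Then `6(n-2)(3n+5)` times the gap between the two sides equals
`(9n-7)·(3(n+1)((n-2)Q - P²) + (3S - (n-2)(b - 9a/2))²) + 4(n-2)²·(3∑(yᵢ - 3a/2)² + (b - 9a/2)²)`,
with `S = ∑(yᵢ - 3a/2)`. By Cauchy–Schwarz `(n-2)Q ≥ P²`, so the gap bounds the squared distance
from the extremal configuration `yᵢ = 3a/2`, `b = 9a/2`; this gives the inequality and its
equality case together.
-/

open Finset

theorem sq_sum_Icc_eq {R : Type*} [CommSemiring R] (f : ℕ → R) (a m : ℕ) :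
    (∑ i ∈ Icc a m, f i) ^ 2 =
      ∑ i ∈ Icc a m, f i ^ 2 + 2 * ∑ i ∈ Icc a m, ∑ j ∈ Icc (i + 1) m, f i * f j := by
  induction m with
  | zero => rcases Nat.eq_zero_or_pos a with rfl | ha <;> simp [*, sq]
  | succ m ih =>
    rcases le_or_gt a (m + 1) with ha | ha
    · have inner : ∀ i ∈ Icc a m, ∑ j ∈ Icc (i + 1) (m + 1), f i * f j
          = ∑ j ∈ Icc (i + 1) m, f i * f j + f i * f (m + 1) := fun i hi =>
        sum_Icc_succ_top (by grind) _
      rw [sum_Icc_succ_top ha, sum_Icc_succ_top ha, sum_Icc_succ_top ha, sum_congr rfl inner,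
        Icc_eq_empty_of_lt (Nat.lt_succ_self (m + 1)), sum_empty, sum_add_distrib, ← sum_mul,
        add_sq, ih]
      ring
    · simp [Icc_eq_empty_of_lt ha]

/-- The left-hand side of the theorem in the variables `N = n`, `a`, `b`, `P`, `Q`; the sum over
pairs `2 ≤ i < j ≤ n` becomes `((b + P)² - (b² + Q)) / 2`. -/
noncomputable def opreaForm (N a b P Q : ℝ) : ℝ :=
  -(N - 2) * a ^ 2 - (N - 1) * Q + (N - 2) * (a * (b + P))
    + (N - 1) * (((b + P) ^ 2 - (b ^ 2 + Q)) / 2)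

theorem opreaForm_gap_identity (N a b P Q : ℝ) (hN : 3 * N + 5 ≠ 0) :
    6 * (N - 2) * (3 * N + 5) *
        ((3 * N - 1) * (N - 2) / (2 * (3 * N + 5)) * (a + b + P) ^ 2 - opreaForm N a b P Q) =
      (9 * N - 7) * (3 * (N + 1) * ((N - 2) * Q - P ^ 2)
          + (3 * (P - 3 / 2 * (N - 2) * a) - (N - 2) * (b - 9 / 2 * a)) ^ 2)
        + 4 * (N - 2) ^ 2 * (3 * (Q - 3 * a * P + 9 / 4 * (N - 2) * a ^ 2) + (b - 9 / 2 * a) ^ 2) := by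
  have h : (3 * N - 1) * (N - 2) / (2 * (3 * N + 5)) * (2 * (3 * N + 5)) = (3 * N - 1) * (N - 2) :=
    div_mul_cancel₀ _ (mul_ne_zero two_ne_zero hN)
  unfold opreaForm
  linear_combination (3 * (N - 2) * (a + b + P) ^ 2) * h

section

variable {ι : Type*} (s : Finset ι) (y : ι → ℝ) (N a b : ℝ)

theorem sum_sub_const_sq (c : ℝ) :
    ∑ i ∈ s, (y i - c) ^ 2 = ∑ i ∈ s, y i ^ 2 - 2 * c * ∑ i ∈ s, y i + #s * c ^ 2 := by
  simp only [sub_sq, sum_add_distrib, sum_sub_distrib, ← sum_mul, ← mul_sum, sum_const,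
    nsmul_eq_mul]
  ring

theorem opreaForm_gap_lower_bound (hN : 2 < N) (hs : (#s : ℝ) = N - 2) :
    2 * (N - 2) * (3 * ∑ i ∈ s, (y i - 3 / 2 * a) ^ 2 + (b - 9 / 2 * a) ^ 2) ≤
      3 * (3 * N + 5) * ((3 * N - 1) * (N - 2) / (2 * (3 * N + 5)) * (a + b + ∑ i ∈ s, y i) ^ 2
        - opreaForm N a b (∑ i ∈ s, y i) (∑ i ∈ s, y i ^ 2)) := by
  have hCS : (∑ i ∈ s, y i) ^ 2 ≤ (N - 2) * ∑ i ∈ s, y i ^ 2 := hs ▸ sq_sum_le_card_mul_sum_sq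
  have hid := opreaForm_gap_identity N a b (∑ i ∈ s, y i) (∑ i ∈ s, y i ^ 2) (by linarith)
  rw [sum_sub_const_sq, hs]
  refine le_of_mul_le_mul_left ?_ (by linarith : (0 : ℝ) < 2 * (N - 2))
  have hrest : 0 ≤ (9 * N - 7) * (3 * (N + 1) * ((N - 2) * ∑ i ∈ s, y i ^ 2 - (∑ i ∈ s, y i) ^ 2)
      + (3 * (∑ i ∈ s, y i - 3 / 2 * (N - 2) * a) - (N - 2) * (b - 9 / 2 * a)) ^ 2) := by
    have hdefect : 0 ≤ (N - 2) * ∑ i ∈ s, y i ^ 2 - (∑ i ∈ s, y i) ^ 2 := by linarith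
    have hcoeff : 0 ≤ 9 * N - 7 := by linarith
    positivity
  linear_combination hrest - hid

theorem opreaForm_le_and_eq_iff (hN : 2 < N) (hs : (#s : ℝ) = N - 2) :
    opreaForm N a b (∑ i ∈ s, y i) (∑ i ∈ s, y i ^ 2) ≤
        (3 * N - 1) * (N - 2) / (2 * (3 * N + 5)) * (a + b + ∑ i ∈ s, y i) ^ 2 ∧
      (opreaForm N a b (∑ i ∈ s, y i) (∑ i ∈ s, y i ^ 2) =
          (3 * N - 1) * (N - 2) / (2 * (3 * N + 5)) * (a + b + ∑ i ∈ s, y i) ^ 2 ↔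
        (∀ i ∈ s, y i = 3 / 2 * a) ∧ b = 9 / 2 * a) := by
  have hgap := opreaForm_gap_lower_bound s y N a b hN hs
  have hT : 0 ≤ ∑ i ∈ s, (y i - 3 / 2 * a) ^ 2 := by positivity
  have hw : 0 ≤ (b - 9 / 2 * a) ^ 2 := sq_nonneg _
  refine ⟨by nlinarith, fun heq => ?_, fun ⟨hy, hb⟩ => ?_⟩
  · rw [heq, sub_self, mul_zero] at hgap
    have hT0 : ∑ i ∈ s, (y i - 3 / 2 * a) ^ 2 = 0 := by nlinarith
    have hw0 : (b - 9 / 2 * a) ^ 2 = 0 := by nlinarith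
    refine ⟨fun i hi => ?_, by linarith [pow_eq_zero_iff (n := 2) two_ne_zero |>.1 hw0]⟩
    have hi0 := (sum_eq_zero_iff_of_nonneg (fun i _ => sq_nonneg _)).1 hT0 i hi
    linarith [pow_eq_zero_iff (n := 2) two_ne_zero |>.1 hi0]
  · have hP : ∑ i ∈ s, y i = (N - 2) * (3 / 2 * a) := by
      rw [sum_congr rfl hy, sum_const, nsmul_eq_mul, hs]
    have hQ : ∑ i ∈ s, y i ^ 2 = (N - 2) * (3 / 2 * a) ^ 2 := by
      rw [sum_congr rfl fun i hi => by rw [hy i hi], sum_const, nsmul_eq_mul, hs]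
    rw [hP, hQ, hb, opreaForm]
    field_simp
    ring

end

/-- For real `y₁,…,yₙ` with `n ≥ 3` and an integer `2 ≤ r ≤ n`:
`−(n−2)y₁² − (n−1)∑_{i≠1,r} yᵢ² + (n−2)∑_{i=2}^{n} y₁yᵢ + (n−1)∑_{2≤i<j≤n} yᵢyⱼ
  ≤ ((3n−1)(n−2)/(2(3n+5)))·(∑_{i=1}^{n} yᵢ)²`,
with equality iff `yᵢ = (3/2)y₁` for `i ≠ 1, r` and `y_r = (9/2)y₁`. -/
theorem oprea_ineq_4_27 (n : ℕ) (hn : 3 ≤ n) (r : ℕ) (hr1 : 2 ≤ r) (hr2 : r ≤ n)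
    (y : ℕ → ℝ) :
    -((n : ℝ) - 2) * y 1 ^ 2
      - ((n : ℝ) - 1) * (∑ i ∈ (Icc 1 n).filter (fun i => i ≠ 1 ∧ i ≠ r), y i ^ 2)
      + ((n : ℝ) - 2) * (∑ i ∈ Icc 2 n, y 1 * y i)
      + ((n : ℝ) - 1) * (∑ i ∈ Icc 2 n, ∑ j ∈ Icc (i + 1) n, y i * y j) ≤
      (3 * (n : ℝ) - 1) * ((n : ℝ) - 2) / (2 * (3 * (n : ℝ) + 5)) * (∑ i ∈ Icc 1 n, y i) ^ 2 ∧
    (-((n : ℝ) - 2) * y 1 ^ 2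
        - ((n : ℝ) - 1) * (∑ i ∈ (Icc 1 n).filter (fun i => i ≠ 1 ∧ i ≠ r), y i ^ 2)
        + ((n : ℝ) - 2) * (∑ i ∈ Icc 2 n, y 1 * y i)
        + ((n : ℝ) - 1) * (∑ i ∈ Icc 2 n, ∑ j ∈ Icc (i + 1) n, y i * y j) =
        (3 * (n : ℝ) - 1) * ((n : ℝ) - 2) / (2 * (3 * (n : ℝ) + 5)) * (∑ i ∈ Icc 1 n, y i) ^ 2 ↔
      (∀ i ∈ Icc 2 n, i ≠ r → y i = 3 / 2 * y 1) ∧ y r = 9 / 2 * y 1) := by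
  have hr : r ∈ Icc 2 n := mem_Icc.2 ⟨hr1, hr2⟩
  set s := (Icc 2 n).erase r
  have hfilter : (Icc 1 n).filter (fun i => i ≠ 1 ∧ i ≠ r) = s := by ext; grind
  have hs : (#s : ℝ) = n - 2 := by
    rw [card_erase_of_mem hr, Nat.card_Icc, Nat.cast_sub (by omega), Nat.cast_sub (by omega)]
    push_cast; ring
  have hsum : ∑ i ∈ Icc 2 n, y i = y r + ∑ i ∈ s, y i := (add_sum_erase _ _ hr).symm
  have hsum_sq : ∑ i ∈ Icc 2 n, y i ^ 2 = y r ^ 2 + ∑ i ∈ s, y i ^ 2 :=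
    (add_sum_erase _ (fun i => y i ^ 2) hr).symm
  have hpairs : ∑ i ∈ Icc 2 n, ∑ j ∈ Icc (i + 1) n, y i * y j
      = ((y r + ∑ i ∈ s, y i) ^ 2 - (y r ^ 2 + ∑ i ∈ s, y i ^ 2)) / 2 := by
    rw [← hsum, ← hsum_sq, sq_sum_Icc_eq]; ring
  have htotal : ∑ i ∈ Icc 1 n, y i = y 1 + y r + ∑ i ∈ s, y i := by
    rw [← insert_Icc_add_one_left_eq_Icc (by omega : 1 ≤ n), sum_insert (by simp),
      one_add_one_eq_two, hsum, add_assoc]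
  have hcond : (∀ i ∈ Icc 2 n, i ≠ r → y i = 3 / 2 * y 1) ↔ ∀ i ∈ s, y i = 3 / 2 * y 1 := by
    simp only [s, mem_erase, and_imp]
    exact forall_congr' fun i => forall_comm
  rw [hfilter, ← mul_sum, hsum, hpairs, htotal, hcond]
  exact opreaForm_le_and_eq_iff s y n (y 1) (y r) (by exact_mod_cast hn) hs
end

section
/- Let μ, α, β, a be real numbers and n ≥ 2 an integer, and let C be the n×n real symmetric matrix with C₁₁ = μ, C₁ᵢ = Cᵢ₁ = a for 2 ≤ i ≤ n, Cᵢᵢ = α for 2 ≤ i ≤ n, and Cᵢⱼ = β for 2 ≤ i ≠ j ≤ n. Then the characteristic polynomial of C factors as det(λIₙ − C) = (λ − α + β)^{n−2}·{λ² − [μ + α + (n−2)β]λ + μα + (n−2)μβ − (n−1)a²}. -/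
/-!
Split `Fin (2 + m)` as `Fin 2 ⊕ Fin m`. Subtracting the second row of `λ I - C` from each of
the last `m` rows and then adding the last `m` columns to the second column turns it into a
block upper triangular matrix whose diagonal blocks are `(λ - α + β) I_m` and the `2 × 2` matrix
`[[λ - μ, -(m + 1) a], [-a, λ - α - m β]]`.
-/

open Matrix

/-- The `n×n` symmetric matrix with first diagonal entry `μ`, remaining diagonal
entries `α`, entries `a` in the rest of the first row and column, and `β` elsewhere. -/
def matC (n : ℕ) (μ α a β : ℝ) : Matrix (Fin n) (Fin n) ℝ :=
  Matrix.of fun i j =>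
    if i = j then (if (i : ℕ) = 0 then μ else α)
    else if (i : ℕ) = 0 ∨ (j : ℕ) = 0 then a else β

namespace Matrix

variable {ι κ R : Type*} [Fintype ι] [Fintype κ] [DecidableEq ι] [DecidableEq κ] [CommRing R]

theorem det_fromBlocks_of_mul_add_eq_zero (A : Matrix ι ι R) (B : Matrix ι κ R)
    (C : Matrix κ ι R) (D : Matrix κ κ R) (X Y : Matrix κ ι R)
    (h : X * A + C + (X * B + D) * Y = 0) :
    (fromBlocks A B C D).det = (A + B * Y).det * (X * B + D).det := by
  have hblock : fromBlocks 1 0 X 1 * fromBlocks A B C D * fromBlocks 1 0 Y 1 =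
      fromBlocks (A + B * Y) B 0 (X * B + D) := by
    simp only [fromBlocks_multiply, Matrix.one_mul, Matrix.mul_one, Matrix.zero_mul,
      Matrix.mul_zero, zero_add, add_zero, ← h]
  have hunit (Z : Matrix κ ι R) : (fromBlocks 1 0 Z 1).det = 1 := by simp
  rw [← det_fromBlocks_zero₂₁, ← hblock, det_mul, det_mul, hunit, hunit, one_mul, mul_one]

end Matrix

theorem smul_one_sub_matC_submatrix_finSumFinEquiv (m : ℕ) (μ α a β lam : ℝ) :
    (lam • 1 - matC (2 + m) μ α a β).submatrix finSumFinEquiv finSumFinEquiv =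
      fromBlocks !![lam - μ, -a; -a, lam - α] (of fun i _ => ![-a, -β] i)
        (of fun _ j => ![-a, -β] j) (of fun k l => if k = l then lam - α else -β) := by
  ext (i | k) (j | l) <;>
    simp only [submatrix_apply, finSumFinEquiv_apply_left, finSumFinEquiv_apply_right, matC,
      Matrix.sub_apply, Matrix.smul_apply, one_apply, smul_eq_mul, of_apply, fromBlocks_apply₁₁,
      fromBlocks_apply₁₂, fromBlocks_apply₂₁, fromBlocks_apply₂₂, Fin.ext_iff, Fin.val_castAdd,
      Fin.val_natAdd]
  · fin_cases i <;> fin_cases j <;> simp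
  · fin_cases i <;> simp [show ∀ l : ℕ, 0 ≠ 2 + l ∧ 1 ≠ 2 + l by omega]
  · fin_cases j <;> simp [show ∀ l : ℕ, 2 + l ≠ 0 ∧ 2 + l ≠ 1 by omega]
  · split_ifs <;> first | ring1 | omega

theorem det_smul_one_sub_matC_two_add (m : ℕ) (μ α a β lam : ℝ) :
    (lam • 1 - matC (2 + m) μ α a β).det =
      (lam - α + β) ^ m * ((lam - μ) * (lam - α - m * β) - (m + 1) * a ^ 2) := by
  set X : Matrix (Fin m) (Fin 2) ℝ := of fun _ => ![0, -1]
  set Y : Matrix (Fin m) (Fin 2) ℝ := of fun _ => ![0, 1]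
  set B : Matrix (Fin 2) (Fin m) ℝ := of fun i _ => ![-a, -β] i
  set D : Matrix (Fin m) (Fin m) ℝ := of fun k l => if k = l then lam - α else -β
  have hD : X * B + D = (lam - α + β) • 1 := by
    ext k l
    rcases eq_or_ne k l with rfl | hkl
    · simp [X, B, D, mul_apply, Fin.sum_univ_two]
      ring
    · simp [X, B, D, mul_apply, Fin.sum_univ_two, hkl]
  have hA : !![lam - μ, -a; -a, lam - α] + B * Y =
      !![lam - μ, -((m + 1) * a); -a, lam - α - m * β] := by
    ext i j
    fin_cases i <;> fin_cases j <;> simp [B, Y, mul_apply] <;> ring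
  rw [← det_submatrix_equiv_self finSumFinEquiv, smul_one_sub_matC_submatrix_finSumFinEquiv,
    det_fromBlocks_of_mul_add_eq_zero _ _ _ _ X Y, hA, hD, det_smul, det_one, det_fin_two_of,
    Fintype.card_fin]
  · ring
  · rw [hD]
    ext k j
    fin_cases j <;> simp [X, Y, mul_apply, Fin.sum_univ_two]
    ring

/-- The characteristic polynomial factorization
`det(λIₙ − C) = (λ − α + β)^{n−2}·(λ² − [μ + α + (n−2)β]λ + μα + (n−2)μβ − (n−1)a²)`. -/
theorem charpoly_matC (n : ℕ) (hn : 2 ≤ n) (μ α β a : ℝ) (lam : ℝ) :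
    (lam • (1 : Matrix (Fin n) (Fin n) ℝ) - matC n μ α a β).det =
      (lam - α + β) ^ (n - 2) *
        (lam ^ 2 - (μ + α + ((n : ℝ) - 2) * β) * lam
          + (μ * α + ((n : ℝ) - 2) * μ * β - ((n : ℝ) - 1) * a ^ 2)) := by
  obtain ⟨m, rfl⟩ := Nat.exists_eq_add_of_le hn
  rw [det_smul_one_sub_matC_two_add, Nat.add_sub_cancel_left]
  push_cast
  ring
end
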